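/- arXiv:1911.05437 — 4 statements merged into one kernel-verified Lean document; each statement's English description precedes it below -/
import Mathlib

section
/- If {|f_i⟩}_{i=1}^{d²} is a SIC in ℂ^d, then the tensor squares form an equiangular tight frame on the symmetric subspace: (1/d²) ∑_{i=1}^{d²} |f_i⟩|f_i⟩⟨f_i|⟨f_i| = (2/(d(d+1))) P_sym, where P_sym is the orthogonal projector onto the symmetric subspace of ℂ^d ⊗ ℂ^d. -/
open Matrix Complex BigOperators

noncomputable def ww (d : ℕ) : ℂ := Complex.exp (2 * Real.pi * Complex.I / d)

noncomputable def tt (d : ℕ) : ℂ := Complex.exp (2 * Real.pi * Complex.I * (d + 1) / (2 * d))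

/-- Displacement operator `T_a = τ^{a₁a₂} S^{a₁} C^{a₂}` as a concrete matrix. -/
noncomputable def T (d : ℕ) (a : ℤ × ℤ) : Matrix (ZMod d) (ZMod d) ℂ :=
  Matrix.of fun i j => tt d ^ (a.1 * a.2) *
    (if i = j + (a.1 : ZMod d) then ww d ^ (a.2 * (j.val : ℤ)) else 0)

def fz {d : ℕ} (a : Fin d × Fin d) : ℤ × ℤ := (((a.1 : ℕ) : ℤ), ((a.2 : ℕ) : ℤ))

noncomputable def dotc {α : Type*} [Fintype α] (v w : α → ℂ) : ℂ := ∑ p, star (v p) * w p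

/-- Orthogonal projection onto the symmetric subspace of `ℂ^d ⊗ ℂ^d`. -/
noncomputable def Psym (d : ℕ) : Matrix (ZMod d × ZMod d) (ZMod d × ZMod d) ℂ :=
  Matrix.of fun p q => (1 / 2 : ℂ) * ((if p = q then 1 else 0) + (if p = (q.2, q.1) then 1 else 0))

/-- `T_a ⊗ T_a` -/
noncomputable def TT (d : ℕ) (a : ℤ × ℤ) : Matrix (ZMod d × ZMod d) (ZMod d × ZMod d) ℂ :=
  Matrix.kroneckerMap (· * ·) (T d a) (T d a)

/-- Discrete Fourier transform matrix. -/
noncomputable def Fdft (d : ℕ) : Matrix (ZMod d) (ZMod d) ℂ :=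
  Matrix.of fun i j => ((1 / Real.sqrt d : ℝ) : ℂ) * ww d ^ (i.val * j.val)

/-- The vector `|0⟩ ⊗ F|0⟩`. -/
noncomputable def b0 (d : ℕ) : ZMod d × ZMod d → ℂ :=
  fun p => (if p.1 = 0 then 1 else 0) * Fdft d p.2 0

/-- Partial trace over the first factor of `|v⟩⟨v|`. -/
noncomputable def ptrace1 (d : ℕ) [NeZero d] (v : ZMod d × ZMod d → ℂ) :
    Matrix (ZMod d) (ZMod d) ℂ :=
  Matrix.of fun j l => ∑ i, v (i, j) * star (v (i, l))

/-- tensor square of a vector -/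
noncomputable def tp {d : ℕ} (f : ZMod d → ℂ) : ZMod d × ZMod d → ℂ :=
  fun p => f p.1 * f p.2

/-- `b` is a fiducial vector of a WH-type basis. -/
def IsWHFiducial (d : ℕ) [NeZero d] (b : ZMod d × ZMod d → ℂ) : Prop :=
  dotc b b = 1 ∧ ∀ a : Fin d × Fin d, ((a.1 : ℕ), (a.2 : ℕ)) ≠ (0, 0) →
    dotc b ((TT d (fz a)).mulVec b) = 0

noncomputable def Cm (d : ℕ) : Matrix (ZMod d) (ZMod d) ℂ :=
  Matrix.of fun i j => if i = j then ww d ^ (i.val) else 0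

noncomputable def Sm (d : ℕ) : Matrix (ZMod d) (ZMod d) ℂ :=
  Matrix.of fun i j => if i = j + 1 then 1 else 0

/-- `(1/√2)(|j⟩|j+i⟩ ± |j+i⟩|j⟩)` (up to normalization), sign `s`. -/
noncomputable def symVec (d : ℕ) (i s : ℤ) (j : ZMod d) : ZMod d × ZMod d → ℂ :=
  fun p => (if p = (j, j + (i : ZMod d)) then 1 else 0) +
    (s : ℂ) * (if p = (j + (i : ZMod d), j) then 1 else 0)

/-- The invariant subspace `H_{±i}`. -/
noncomputable def Hsub (d : ℕ) (i s : ℤ) : Submodule ℂ (ZMod d × ZMod d → ℂ) :=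
  Submodule.span ℂ (Set.range (symVec d i s))

/-- The swap operator on `ℂ^d ⊗ ℂ^d`. -/
def swapL (d : ℕ) : (ZMod d × ZMod d → ℂ) →ₗ[ℂ] (ZMod d × ZMod d → ℂ) where
  toFun v := fun p => v (p.2, p.1)
  map_add' _ _ := rfl
  map_smul' _ _ := rfl

/-- `H_t` for `t ∈ [-(d-1)/2 .. (d-1)/2]` (d odd). -/
noncomputable def Hodd (d : ℕ) (t : ℤ) : Submodule ℂ (ZMod d × ZMod d → ℂ) :=
  if 0 ≤ t then Hsub d t 1 else Hsub d (-t) (-1)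


/-!
The tensor squares `|fᵢ⟩|fᵢ⟩` are unit vectors of the symmetric subspace, so their frame operator
`A` satisfies `tr (A P_sym) = d²`, while equiangularity fixes the frame potential
`tr (A²) = d² + d² (d² - 1) / (d + 1)²`. These values give equality in the Cauchy–Schwarz inequality
`tr (A P)² ≤ tr (A²) tr P` for the Hilbert–Schmidt inner product, which forces `A` to be a multiple
of `P_sym`.
-/

namespace Matrix

open scoped ComplexOrder

variable {n 𝕜 : Type*} [Fintype n] [RCLike 𝕜]

theorem eq_smul_of_trace_mul_self_mul_trace_eq {A P : Matrix n n 𝕜} (hA : A.IsHermitian)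
    (hP : P.IsHermitian) (hPP : P * P = P) (htr : P.trace ≠ 0)
    (h : (A * A).trace * P.trace = (A * P).trace ^ 2) :
    A = ((A * P).trace / P.trace) • P := by
  set c := (A * P).trace / P.trace
  have hPA : (P * A).trace = (A * P).trace := trace_mul_comm P A
  have hc : star c = c := by
    have h1 : star (A * P).trace = (A * P).trace := by
      rw [← trace_conjTranspose, conjTranspose_mul, hA.eq, hP.eq, hPA]
    have h2 : star P.trace = P.trace := by rw [← trace_conjTranspose, hP.eq]
    simp only [c, star_div₀, h1, h2]
  have hcP : c * P.trace = (A * P).trace := div_mul_cancel₀ _ htr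
  rw [← sub_eq_zero, ← trace_conjTranspose_mul_self_eq_zero_iff, conjTranspose_sub,
    conjTranspose_smul, hA.eq, hP.eq, hc]
  simp only [sub_mul, mul_sub, smul_mul, Matrix.mul_smul, smul_smul, hPP, trace_sub, trace_smul,
    hPA, smul_eq_mul]
  -- `tr P · ‖A - c P‖² = tr (A²) tr P - tr (A P)² + (c tr P - tr (A P))²`
  refine mul_left_cancel₀ htr ?_
  linear_combination h + (c * P.trace - (A * P).trace) * hcP

end Matrix

lemma dotc_eq_star_dotProduct {α : Type*} [Fintype α] (v w : α → ℂ) : dotc v w = star v ⬝ᵥ w :=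
  rfl

lemma star_dotc {α : Type*} [Fintype α] (v w : α → ℂ) : star (dotc v w) = dotc w v := by
  simp only [dotc_eq_star_dotProduct, ← star_dotProduct_star, star_star, dotProduct_comm]

lemma trace_vecMulVec_star_mul_vecMulVec_star {α : Type*} [Fintype α] (v w : α → ℂ) :
    (vecMulVec v (star v) * vecMulVec w (star w)).trace = (‖dotc v w‖ ^ 2 : ℂ) := by
  rw [vecMulVec_mul_vecMulVec, trace_vecMulVec, dotProduct_smul, smul_eq_mul, dotProduct_comm v,
    ← dotc_eq_star_dotProduct, ← dotc_eq_star_dotProduct, ← star_dotc v w]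
  exact Complex.mul_conj' _

def frameOp {ι α : Type*} [Fintype ι] (v : ι → α → ℂ) : Matrix α α ℂ :=
  ∑ i, vecMulVec (v i) (star (v i))

section frameOp

variable {ι α : Type*} [Fintype ι] (v : ι → α → ℂ)

lemma isHermitian_frameOp : (frameOp v).IsHermitian := by
  simp only [IsHermitian, frameOp, conjTranspose_sum, conjTranspose_vecMulVec, star_star]

variable [Fintype α]

lemma trace_frameOp_mul (M : Matrix α α ℂ) :
    (frameOp v * M).trace = ∑ i, dotc (v i) (M *ᵥ v i) := by
  simp only [frameOp, Finset.sum_mul, trace_sum, vecMulVec_mul, trace_vecMulVec,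
    dotProduct_comm _ (_ ᵥ* M), ← dotProduct_mulVec, dotc_eq_star_dotProduct]

lemma trace_frameOp_mul_self [DecidableEq ι] {a b : ℝ}
    (hdiag : ∀ i, ‖dotc (v i) (v i)‖ ^ 2 = a) (hoff : ∀ i j, i ≠ j → ‖dotc (v i) (v j)‖ ^ 2 = b) :
    (frameOp v * frameOp v).trace =
      Fintype.card ι * a + Fintype.card ι * (Fintype.card ι - 1) * b := by
  have hij : ∀ i j, (‖dotc (v i) (v j)‖ ^ 2 : ℂ) = b + if i = j then (a - b : ℂ) else 0 := by
    intro i j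
    split_ifs with h
    · subst h; rw [← hdiag i]; push_cast; ring
    · rw [← hoff i j h]; push_cast; ring
  simp only [frameOp, Finset.sum_mul, Finset.mul_sum, trace_sum,
    trace_vecMulVec_star_mul_vecMulVec_star, hij, Finset.sum_add_distrib, Finset.sum_ite_eq',
    Finset.mem_univ, if_true, Finset.sum_const, Finset.card_univ, nsmul_eq_mul]
  ring

end frameOp

section Psym

variable (d : ℕ)

lemma isHermitian_psym : (Psym d).IsHermitian := by
  ext p q
  have hswap : q = (p.2, p.1) ↔ p = (q.2, q.1) := by
    constructor <;> rintro rfl <;> rfl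
  simp [Psym, hswap, eq_comm]

variable [NeZero d]

lemma psym_mulVec (x : ZMod d × ZMod d → ℂ) : Psym d *ᵥ x = (1 / 2 : ℂ) • (x + swapL d x) := by
  ext p
  have hswap : ∀ q : ZMod d × ZMod d, p = (q.2, q.1) ↔ q = (p.2, p.1) := by
    intro q; constructor <;> rintro rfl <;> rfl
  simp [mulVec, dotProduct, Psym, swapL, hswap, add_mul, Finset.sum_add_distrib, mul_add]

lemma psym_mulVec_of_swapL_eq {x : ZMod d × ZMod d → ℂ} (hx : swapL d x = x) :
    Psym d *ᵥ x = x := by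
  rw [psym_mulVec, hx, ← two_smul ℂ x, smul_smul]
  norm_num

lemma swapL_psym_mulVec (x : ZMod d × ZMod d → ℂ) : swapL d (Psym d *ᵥ x) = Psym d *ᵥ x := by
  rw [psym_mulVec, map_smul, map_add, add_comm]
  rfl

lemma psym_mul_psym : Psym d * Psym d = Psym d :=
  ext_iff_mulVec.2 fun x => by
    rw [← mulVec_mulVec, psym_mulVec_of_swapL_eq d (swapL_psym_mulVec d x)]

lemma trace_psym : (Psym d).trace = (d * (d + 1) / 2 : ℂ) := by
  have hdiag : ∀ p : ZMod d × ZMod d, p = (p.2, p.1) ↔ p.1 = p.2 :=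
    fun p => ⟨fun h => (Prod.ext_iff.1 h).1, fun h => Prod.ext h h.symm⟩
  simp [trace, Psym, hdiag, mul_add, Finset.sum_add_distrib, Fintype.sum_prod_type]
  ring

end Psym

lemma dotc_tp {d : ℕ} [NeZero d] (v w : ZMod d → ℂ) : dotc (tp v) (tp w) = dotc v w ^ 2 := by
  simp only [dotc, tp, sq, Finset.sum_mul_sum, Fintype.sum_prod_type, star_mul']
  exact Finset.sum_congr rfl fun a _ => Finset.sum_congr rfl fun b _ => by ring

lemma swapL_tp {d : ℕ} (v : ZMod d → ℂ) : swapL d (tp v) = tp v :=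
  funext fun _ => mul_comm _ _

theorem stmt5_general (d : ℕ) [NeZero d] (f : Fin (d * d) → ZMod d → ℂ)
    (hnorm : ∀ i, dotc (f i) (f i) = 1)
    (hang : ∀ i j, i ≠ j → ‖dotc (f i) (f j)‖ ^ 2 = 1 / ((d : ℝ) + 1)) :
    ((d : ℂ) * d)⁻¹ • ∑ i, Matrix.vecMulVec (tp (f i)) (star (tp (f i)))
      = (2 / ((d : ℂ) * ((d : ℂ) + 1))) • Psym d := by
  set A := frameOp fun i => tp (f i)
  have hd : (d : ℂ) ≠ 0 := NeZero.ne _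
  have hd1 : (d : ℂ) + 1 ≠ 0 := by norm_cast
  have hAP : (A * Psym d).trace = d * d := by
    simp [A, trace_frameOp_mul, psym_mulVec_of_swapL_eq, swapL_tp, dotc_tp, hnorm]
  have hAA : (A * A).trace = d * d + d * d * (d * d - 1) * (1 / ((d : ℂ) + 1)) ^ 2 := by
    rw [trace_frameOp_mul_self (a := 1) (b := (1 / (d + 1)) ^ 2)]
    · simp
    · intro i; simp [dotc_tp, hnorm]
    · intro i j h; rw [dotc_tp, norm_pow, ← pow_mul, mul_comm, pow_mul, hang i j h]
  have hA : A = ((A * Psym d).trace / (Psym d).trace) • Psym d :=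
    Matrix.eq_smul_of_trace_mul_self_mul_trace_eq (isHermitian_frameOp _) (isHermitian_psym d)
      (psym_mul_psym d) (by rw [trace_psym]; simp [hd, hd1])
      (by rw [hAA, hAP, trace_psym]; field_simp; ring)
  change _ • A = _
  rw [hA, hAP, trace_psym, smul_smul]
  congr 1
  field_simp

theorem stmt5 (d : ℕ) [NeZero d] (f : Fin (d * d) → ZMod d → ℂ)
    (hnorm : ∀ i, dotc (f i) (f i) = 1)
    (hang : ∀ i j, i ≠ j → ‖dotc (f i) (f j)‖ ^ 2 = 1 / ((d : ℝ) + 1))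
    (hres : (d : ℂ)⁻¹ • ∑ i, Matrix.vecMulVec (f i) (star (f i)) = 1) :
    ((d : ℂ) * d)⁻¹ • ∑ i, Matrix.vecMulVec (tp (f i)) (star (tp (f i)))
      = (2 / ((d : ℂ) * ((d : ℂ) + 1))) • Psym d :=
  stmt5_general d f hnorm hang
end

section
/- The projector onto the symmetric subspace of ℂ^d⊗ℂ^d satisfies P_sym = ((d+1)/(2d)) ( I + (1/(d+1)) ∑_{a∈[0..d-1]², a≠(0,0)} T_a ⊗ T_{-a} ). -/
open Matrix Complex BigOperators

/-!
Summing `T_a ⊗ T_{-a}` over all `a ∈ [0..d-1]²` gives `d · SWAP`: the entry at `((i,k),(j,l))`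
is a character sum over `a₂` which vanishes unless `a₁ ≡ l - j`, and the remaining shift
conditions then say `(i,k) = (l,j)`. The term `a = 0` is the identity, so the right-hand side is
`(d+1)/(2d) · (I + (d SWAP - I)/(d+1)) = (I + SWAP)/2 = P_sym`.
-/

lemma tt_sq (d : ℕ) [NeZero d] : tt d ^ 2 = ww d := by
  have hd : (d : ℂ) ≠ 0 := NeZero.ne _
  have hexponent : ((2 : ℕ) : ℂ) * (2 * Real.pi * I * (d + 1) / (2 * d)) =
      2 * Real.pi * I + 2 * Real.pi * I / d := by
    push_cast
    field_simp
  rw [tt, ww, ← Complex.exp_nat_mul, hexponent, Complex.exp_add, Complex.exp_two_pi_mul_I,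
    one_mul]

lemma isPrimitiveRoot_ww (d : ℕ) [NeZero d] : IsPrimitiveRoot (ww d) d :=
  Complex.isPrimitiveRoot_exp d (NeZero.ne d)

lemma IsPrimitiveRoot.sum_fin_zpow_mul {K : Type*} [Field K] {ζ : K} {d : ℕ}
    (hζ : IsPrimitiveRoot ζ d) (m : ℤ) :
    ∑ a : Fin d, ζ ^ (((a : ℕ) : ℤ) * m) = if (m : ZMod d) = 0 then (d : K) else 0 := by
  simp_rw [mul_comm _ m, _root_.zpow_mul, zpow_natCast]
  rw [Fin.sum_univ_eq_sum_range (fun i => (ζ ^ m) ^ i)]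
  by_cases h : ζ ^ m = 1
  · simp [h, ZMod.intCast_zmod_eq_zero_iff_dvd, ← hζ.zpow_eq_one_iff_dvd]
  · rw [geom_sum_eq h, ← zpow_natCast, ← _root_.zpow_mul, mul_comm, _root_.zpow_mul, zpow_natCast,
      hζ.pow_eq_one, _root_.one_zpow, sub_self, zero_div, if_neg]
    rwa [ZMod.intCast_zmod_eq_zero_iff_dvd, ← hζ.zpow_eq_one_iff_dvd]

lemma T_apply_mul_T_neg_apply (d : ℕ) [NeZero d] (a : ℤ × ℤ) (i j k l : ZMod d) :
    T d a i j * T d (-a) k l =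
      if i = j + a.1 ∧ k = l - a.1 then ww d ^ (a.2 * (a.1 + j.val - l.val)) else 0 := by
  have hww : ww d ≠ 0 := Complex.exp_ne_zero _
  have htt : tt d ^ (a.1 * a.2) * tt d ^ (-a.1 * -a.2) = ww d ^ (a.1 * a.2) := by
    have htt0 : tt d ≠ 0 := Complex.exp_ne_zero _
    rw [← tt_sq, ← zpow_natCast, ← _root_.zpow_mul, ← zpow_add₀ htt0]
    ring_nf
  simp only [T, of_apply, Prod.fst_neg, Prod.snd_neg, Int.cast_neg, ← sub_eq_add_neg]
  split_ifs
  · rw [mul_mul_mul_comm, htt, ← zpow_add₀ hww, ← zpow_add₀ hww]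
    ring_nf
  all_goals simp_all

lemma bijective_natCast_fin (d : ℕ) [NeZero d] :
    Function.Bijective (fun a : Fin d => ((a : ℕ) : ZMod d)) := by
  refine (Fintype.bijective_iff_injective_and_card _).2 ⟨fun a b h => Fin.ext ?_, by simp⟩
  simpa [ZMod.val_cast_of_lt a.isLt, ZMod.val_cast_of_lt b.isLt] using congrArg ZMod.val h

lemma sum_T_apply_mul_T_neg_apply (d : ℕ) [NeZero d] (i j k l : ZMod d) :
    ∑ a : Fin d × Fin d, T d (fz a) i j * T d (-fz a) k l =
      if (i, k) = (l, j) then (d : ℂ) else 0 := by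
  have hcast (n : ℕ) : ((n + j.val - l.val : ℤ) : ZMod d) = n + j - l := by
    push_cast [ZMod.natCast_val, ZMod.cast_id]; ring
  simp only [Fintype.sum_prod_type, fz, T_apply_mul_T_neg_apply, Int.cast_natCast,
    Finset.sum_ite_irrel, Finset.sum_const_zero, (isPrimitiveRoot_ww d).sum_fin_zpow_mul, hcast]
  rw [(bijective_natCast_fin d).sum_comp fun x =>
    if i = j + x ∧ k = l - x then if x + j - l = 0 then (d : ℂ) else 0 else 0]
  refine (Finset.sum_eq_single (l - j) (fun x _ hx => ?_) (by simp)).trans ?_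
  · simp [sub_eq_zero, ← eq_sub_iff_add_eq, hx]
  · simp [Prod.ext_iff]

def swapMatrix (α R : Type*) [DecidableEq α] [Zero R] [One R] : Matrix (α × α) (α × α) R :=
  of fun p q => if p = q.swap then 1 else 0

lemma Psym_eq (d : ℕ) : Psym d = (1 / 2 : ℂ) • (1 + swapMatrix (ZMod d) ℂ) := by
  ext p q
  simp [Psym, swapMatrix, one_apply, Prod.swap]

lemma sum_kroneckerMap_T_T_neg (d : ℕ) [NeZero d] :
    ∑ a : Fin d × Fin d, kroneckerMap (· * ·) (T d (fz a)) (T d (-fz a)) =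
      (d : ℂ) • swapMatrix (ZMod d) ℂ := by
  ext ⟨i, k⟩ ⟨j, l⟩
  simp [Matrix.sum_apply, swapMatrix, sum_T_apply_mul_T_neg_apply]

lemma T_zero (d : ℕ) : T d 0 = 1 := by
  ext i j
  simp [T, one_apply]

theorem stmt11 (d : ℕ) [NeZero d] :
    Psym d = (((d : ℂ) + 1) / (2 * d)) •
      ((1 : Matrix (ZMod d × ZMod d) (ZMod d × ZMod d) ℂ) +
        ((d : ℂ) + 1)⁻¹ •
          ∑ a ∈ Finset.univ.filter (fun a : Fin d × Fin d => ((a.1 : ℕ), (a.2 : ℕ)) ≠ (0, 0)),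
            Matrix.kroneckerMap (· * ·) (T d (fz a)) (T d (-(fz a)))) := by
  have hd : (d : ℂ) ≠ 0 := NeZero.ne _
  have hd1 : (d : ℂ) + 1 ≠ 0 := by exact_mod_cast d.succ_ne_zero
  have hnonzero : Finset.univ.filter (fun a : Fin d × Fin d => ((a.1 : ℕ), (a.2 : ℕ)) ≠ (0, 0)) =
      Finset.univ.erase 0 := by
    ext a
    simp only [Finset.mem_filter, Finset.mem_univ, true_and, Finset.mem_erase, and_true, ne_eq,
      Prod.ext_iff, Fin.ext_iff, Prod.fst_zero, Prod.snd_zero, Fin.val_zero]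
  have hfz : fz (0 : Fin d × Fin d) = 0 := by simp [fz]
  rw [hnonzero, Finset.sum_erase_eq_sub (Finset.mem_univ _), sum_kroneckerMap_T_T_neg, hfz,
    neg_zero, T_zero, kroneckerMap_one_one _ zero_mul mul_zero (mul_one 1), Psym_eq]
  match_scalars
  · field_simp
    ring
  · field_simp
end

section
/- The partial trace over the first factor of |v⟩⟨v|, where |v⟩ = P_sym(|0⟩⊗F|0⟩), is a matrix of rank 2. Hence the Schmidt rank of P_sym(|0⟩⊗F|0⟩) equals 2 (for d ≥ 2). -/
open Matrix Complex BigOperators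

/-!
The coefficient matrix `V i j = v (i, j)` of `v = P_sym (|0⟩ ⊗ F|0⟩)` is
`(δ_{i0} + δ_{j0}) / (2√d) = c (e₀ 1ᵀ + 1 e₀ᵀ)`, and `Tr₁ |v⟩⟨v| = (Vᴴ V)ᵀ` has the rank of `V`.
That rank is at most 2 as a sum of two rank-one matrices, and at least 2 because the minor on
rows and columns `{0, 1}` is `-c² ≠ 0`.
-/

namespace Matrix

variable {m n K : Type*} [Fintype n] [Field K]

theorem rank_add_le (A B : Matrix m n K) : (A + B).rank ≤ A.rank + B.rank := by
  rw [rank, rank, rank, mulVecLin_add]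
  exact (Submodule.finrank_mono (LinearMap.range_add_le _ _)).trans
    (Submodule.finrank_add_le_finrank_add_finrank _ _)

theorem le_rank_of_det_submatrix_ne_zero {k : ℕ} (A : Matrix m n K) (r : Fin k → m)
    (c : Fin k → n) (h : (A.submatrix r c).det ≠ 0) : k ≤ A.rank := by
  simpa [rank_of_det_ne_zero h] using rank_submatrix_le A r c

theorem rank_vecMulVec_single_add_vecMulVec_single [DecidableEq n] {i j : n} (hij : i ≠ j)
    {c : K} (hc : c ≠ 0) :
    (vecMulVec (Pi.single i c) 1 + vecMulVec 1 (Pi.single i c)).rank = 2 := by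
  refine le_antisymm ((rank_add_le _ _).trans (add_le_add (rank_vecMulVec_le _ _)
    (rank_vecMulVec_le _ _))) (le_rank_of_det_submatrix_ne_zero _ ![i, j] ![i, j] ?_)
  rw [det_fin_two]
  simp [hij.symm, hc]

end Matrix

open scoped ComplexOrder in
theorem rank_ptrace1 (d : ℕ) [NeZero d] (v : ZMod d × ZMod d → ℂ) :
    (ptrace1 d v).rank = (of fun i j => v (i, j)).rank := by
  have hV : ptrace1 d v = ((of fun i j => v (i, j))ᴴ * of fun i j => v (i, j))ᵀ := by
    ext j l
    simp [ptrace1, mul_apply, mul_comm]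
  rw [hV, rank_transpose, rank_conjTranspose_mul_self]

theorem Psym_mulVec_apply (d : ℕ) [NeZero d] (v : ZMod d × ZMod d → ℂ) (p : ZMod d × ZMod d) :
    (Psym d *ᵥ v) p = (v p + v (p.2, p.1)) / 2 := by
  have hswap (q : ZMod d × ZMod d) : p = (q.2, q.1) ↔ q = (p.2, p.1) := by
    constructor <;> rintro rfl <;> rfl
  simp only [Psym, mulVec, dotProduct, of_apply, hswap, eq_comm (a := p), add_mul, mul_add,
    Finset.sum_add_distrib, mul_ite, ite_mul, zero_mul, mul_zero, Finset.sum_ite_eq',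
    Finset.mem_univ, if_true]
  ring

theorem b0_eq_single (d : ℕ) [NeZero d] :
    b0 d = fun p => (Pi.single 0 ((1 / Real.sqrt d : ℝ) : ℂ) : ZMod d → ℂ) p.1 := by
  ext ⟨i, j⟩
  by_cases hi : i = 0 <;> simp [b0, Fdft, hi]

theorem stmt12 (d : ℕ) [NeZero d] (hd : 2 ≤ d) :
    (ptrace1 d ((Psym d).mulVec (b0 d))).rank = 2 := by
  have : Fact (1 < d) := ⟨hd⟩
  set c : ℂ := ((1 / (2 * Real.sqrt d) : ℝ) : ℂ)
  have hc : c ≠ 0 := by simp [c, NeZero.ne d]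
  have hV : (of fun i j => (Psym d *ᵥ b0 d) (i, j)) =
      vecMulVec (Pi.single 0 c) 1 + vecMulVec 1 (Pi.single 0 c) := by
    ext i j
    simp only [of_apply, Psym_mulVec_apply, b0_eq_single, Matrix.add_apply, vecMulVec_apply,
      Pi.single_apply, Pi.one_apply, c]
    split_ifs <;> push_cast <;> ring
  rw [rank_ptrace1, hV]
  exact rank_vecMulVec_single_add_vecMulVec_single (zero_ne_one' (ZMod d)) hc
end

section
/- Assume d odd. For i ∈ [0..(d-1)/2] let H_i ⊂ ℂ^d⊗ℂ^d be spanned by the vectors (1/√2)(|j⟩|j+i⟩ + |j+i⟩|j⟩) (and |j⟩|j⟩ for i=0), j ∈ [0..d-1], indices mod d, and for i ∈ [1..(d-1)/2] let H_{-i} be spanned by (1/√2)(|j⟩|j+i⟩ − |j+i⟩|j⟩). Then each H_i has dimension d, each H_i is invariant under C⊗C and S⊗S, ⊕_{i≥0} H_i = H_sym, and ⊕_{i<0} H_i is the antisymmetric subspace. -/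
open Matrix Complex BigOperators

/-! Because `d` is odd, `2i = 0` in `ZMod d` forces `i = 0`, so the coordinate `(j, j + i)` occurs
in `symVec d i s j` and in no other `symVec d i s b`; this gives linear independence, hence
dimension `d`. `C ⊗ C` rescales each `symVec d i s j` and `S ⊗ S` maps it to
`symVec d i s (j + 1)`. Each `symVec d i s j` is an eigenvector of the swap with eigenvalue `s`;
conversely, if `swap v = s v` then `v = ½ ∑ₚ v p (e_p + s e_{swap p})`, and `e_p + s e_{swap p}` is
`symVec d i s j` or `s • symVec d i s j` for the representative `i ∈ [0, (d-1)/2]` of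
`±(p.2 - p.1)`. -/

namespace ZMod

lemma eq_zero_of_add_self_eq_zero {d : ℕ} (hd : Odd d) {a : ZMod d} (h : a + a = 0) :
    a = 0 := by
  have h2 : IsUnit (2 : ZMod d) := by
    exact_mod_cast (isUnit_iff_coprime 2 d).mpr (Nat.coprime_two_left.mpr hd)
  exact h2.mul_right_eq_zero.mp (by rwa [two_mul])

lemma intCast_ne_zero_of_pos_of_lt {d : ℕ} {i : ℤ} (h0 : 0 < i) (hi : i < d) :
    (i : ZMod d) ≠ 0 := by
  rw [Ne, intCast_zmod_eq_zero_iff_dvd]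
  intro h
  have := Int.le_of_dvd h0 h
  omega

lemma exists_mem_Icc_eq_or_eq_neg {d : ℕ} [NeZero d] (hd : Odd d) (δ : ZMod d) :
    ∃ i ∈ Finset.Icc (0 : ℤ) (((d : ℤ) - 1) / 2), (i : ZMod d) = δ ∨ (i : ZMod d) = -δ := by
  refine ⟨δ.valMinAbs.natAbs, Finset.mem_Icc.mpr ⟨by positivity, ?_⟩, ?_⟩
  · obtain ⟨m, rfl⟩ := hd
    have := δ.natAbs_valMinAbs_le
    omega
  · rcases Int.natAbs_eq δ.valMinAbs with h | h
    · left
      rw [← h, coe_valMinAbs]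
    · right
      rw [show (δ.valMinAbs.natAbs : ℤ) = -δ.valMinAbs by omega, Int.cast_neg, coe_valMinAbs]

end ZMod

theorem linearIndependent_of_apply_eq_zero_of_ne {ι κ K : Type*} [Fintype ι] [Ring K]
    [NoZeroDivisors K] (v : ι → κ → K) (e : ι → κ) (hdiag : ∀ j, v j (e j) ≠ 0)
    (hoff : ∀ j b, b ≠ j → v b (e j) = 0) : LinearIndependent K v := by
  rw [Fintype.linearIndependent_iff]
  intro c hc j
  have hj := congrFun hc (e j)
  simp only [Finset.sum_apply, Pi.smul_apply, smul_eq_mul, Pi.zero_apply] at hj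
  rw [Finset.sum_eq_single j (fun b _ hb => by rw [hoff j b hb, mul_zero]) (by simp)] at hj
  exact (mul_eq_zero.mp hj).resolve_right (hdiag j)

theorem Matrix.mulVec_mem_span_range {ι n R : Type*} [Fintype n] [CommSemiring R]
    (M : Matrix n n R) {v : ι → n → R} (h : ∀ j, M *ᵥ v j ∈ Submodule.span R (Set.range v))
    {x : n → R} (hx : x ∈ Submodule.span R (Set.range v)) :
    M *ᵥ x ∈ Submodule.span R (Set.range v) :=
  (Submodule.span_le (p := (Submodule.span R (Set.range v)).comap M.mulVecLin)).mpr
    (by rintro _ ⟨j, rfl⟩; exact h j) hx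

theorem Matrix.kroneckerMap_mul_mulVec_single_one {m n R : Type*} [Fintype m] [Fintype n]
    [DecidableEq m] [DecidableEq n] [NonAssocSemiring R] (A : Matrix m m R) (B : Matrix n n R)
    (k : m) (l : n) :
    Matrix.kroneckerMap (· * ·) A B *ᵥ Pi.single (k, l) 1 = fun p => A p.1 k * B p.2 l := by
  rw [Matrix.mulVec_single_one]
  rfl

section SymVec

variable {d : ℕ} (i s : ℤ)

lemma symVec_eq_single (j : ZMod d) :
    symVec d i s j =
      Pi.single (j, j + (i : ZMod d)) 1 + (s : ℂ) • Pi.single (j + (i : ZMod d), j) 1 := by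
  funext p
  simp [symVec, Pi.single_apply]

lemma symVec_apply_self (j : ZMod d) :
    symVec d i s j (j, j + i) = if (i : ZMod d) = 0 then 1 + (s : ℂ) else 1 := by
  split_ifs with h <;> simp [symVec, h]

lemma symVec_apply_of_ne (hd : Odd d) {j b : ZMod d} (hb : b ≠ j) :
    symVec d i s b (j, j + i) = 0 := by
  have h1 : (j, j + (i : ZMod d)) ≠ (b, b + i) := fun h => hb (congrArg Prod.fst h).symm
  have h2 : (j, j + (i : ZMod d)) ≠ (b + i, b) := by
    intro h
    simp only [Prod.mk.injEq] at h
    have hi : (i : ZMod d) = 0 :=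
      ZMod.eq_zero_of_add_self_eq_zero hd (by linear_combination h.2 - h.1)
    exact hb (by simpa [hi] using h.1.symm)
  simp [symVec, h1, h2]

lemma linearIndependent_symVec [NeZero d] (hd : Odd d) (h : (i : ZMod d) ≠ 0 ∨ s ≠ -1) :
    LinearIndependent ℂ (symVec d i s) := by
  refine linearIndependent_of_apply_eq_zero_of_ne _ (fun j => (j, j + i))
    (fun j => ?_) (fun j b hb => symVec_apply_of_ne i s hd hb)
  rw [symVec_apply_self]
  split_ifs with hi
  · have hs : s ≠ -1 := h.resolve_left (not_not_intro hi)
    intro h0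
    exact hs (by exact_mod_cast eq_neg_of_add_eq_zero_right h0)
  · exact one_ne_zero

lemma finrank_Hsub [NeZero d] (hd : Odd d) (h : (i : ZMod d) ≠ 0 ∨ s ≠ -1) :
    Module.finrank ℂ (Hsub d i s) = d :=
  (finrank_span_eq_card (linearIndependent_symVec i s hd h)).trans (ZMod.card d)

end SymVec

section Invariance

variable {d : ℕ} [NeZero d]

lemma kroneckerMap_Cm_mulVec_single (k l : ZMod d) :
    Matrix.kroneckerMap (· * ·) (Cm d) (Cm d) *ᵥ Pi.single (k, l) 1 =
      (ww d ^ k.val * ww d ^ l.val) • Pi.single (k, l) 1 := by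
  rw [Matrix.kroneckerMap_mul_mulVec_single_one]
  funext p
  by_cases hp : p = (k, l)
  · subst hp; simp [Cm]
  · have : p.1 ≠ k ∨ p.2 ≠ l := by
      contrapose! hp; exact Prod.ext hp.1 hp.2
    rcases this with h | h <;> simp [Cm, h, hp]

lemma kroneckerMap_Sm_mulVec_single (k l : ZMod d) :
    Matrix.kroneckerMap (· * ·) (Sm d) (Sm d) *ᵥ Pi.single (k, l) 1 =
      Pi.single (k + 1, l + 1) 1 := by
  rw [Matrix.kroneckerMap_mul_mulVec_single_one]
  funext p
  simp only [Sm, Matrix.of_apply, Pi.single_apply, Prod.ext_iff]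
  split_ifs <;> simp_all

variable (i s : ℤ) (j : ZMod d)

lemma kroneckerMap_Cm_mulVec_symVec :
    Matrix.kroneckerMap (· * ·) (Cm d) (Cm d) *ᵥ symVec d i s j =
      (ww d ^ j.val * ww d ^ (j + (i : ZMod d)).val) • symVec d i s j := by
  simp only [symVec_eq_single, Matrix.mulVec_add, Matrix.mulVec_smul,
    kroneckerMap_Cm_mulVec_single, smul_add, smul_comm (s : ℂ), mul_comm (ww d ^ j.val)]

lemma kroneckerMap_Sm_mulVec_symVec :
    Matrix.kroneckerMap (· * ·) (Sm d) (Sm d) *ᵥ symVec d i s j = symVec d i s (j + 1) := by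
  simp only [symVec_eq_single, Matrix.mulVec_add, Matrix.mulVec_smul,
    kroneckerMap_Sm_mulVec_single, add_right_comm j]

end Invariance

section Swap

variable {d : ℕ} {s : ℤ}

lemma swapL_single (p : ZMod d × ZMod d) : swapL d (Pi.single p 1) = Pi.single p.swap 1 := by
  funext q
  simp only [swapL, LinearMap.coe_mk, AddHom.coe_mk, Pi.single_apply, Prod.ext_iff, Prod.fst_swap,
    Prod.snd_swap, and_comm]

lemma swapL_symVec (hs : s * s = 1) (i : ℤ) (j : ZMod d) :
    swapL d (symVec d i s j) = (s : ℂ) • symVec d i s j := by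
  have hs' : (s : ℂ) * s = 1 := by exact_mod_cast hs
  simp only [symVec_eq_single, map_add, map_smul, swapL_single, Prod.swap_prod_mk, smul_add,
    smul_smul, hs', one_smul, add_comm]

lemma Hsub_le_ker (hs : s * s = 1) (i : ℤ) :
    Hsub d i s ≤ LinearMap.ker (swapL d - (s : ℂ) • LinearMap.id) := by
  rw [Hsub, Submodule.span_le]
  rintro _ ⟨j, rfl⟩
  simp [swapL_symVec hs]

lemma Hsub_zero_neg_one : Hsub d 0 (-1) = ⊥ := by
  rw [Hsub, Submodule.span_eq_bot]
  rintro _ ⟨j, rfl⟩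
  simp [symVec_eq_single]

variable [NeZero d]

lemma eq_smul_sum_of_swapL_eq (hs : s * s = 1) {v : ZMod d × ZMod d → ℂ}
    (hv : swapL d v = (s : ℂ) • v) :
    v = (2 : ℂ)⁻¹ • ∑ p, v p • (Pi.single p 1 + (s : ℂ) • Pi.single p.swap 1) := by
  funext q
  have hq : v q.swap = s * v q := congrFun hv q
  have hs' : (s : ℂ) * s = 1 := by exact_mod_cast hs
  simp only [Pi.smul_apply, smul_eq_mul, Finset.sum_apply, Pi.add_apply, Pi.single_apply,
    mul_add, Finset.sum_add_distrib, ← Prod.swap_eq_iff_eq_swap, mul_ite, mul_one, mul_zero,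
    Finset.sum_ite_eq, Finset.mem_univ, if_true, hq]
  linear_combination (-(2 : ℂ)⁻¹ * v q) * hs'

lemma single_add_smul_single_swap_mem (hd : Odd d) (hs : s * s = 1) (p : ZMod d × ZMod d) :
    Pi.single p 1 + (s : ℂ) • Pi.single p.swap 1 ∈
      ⨆ i ∈ Finset.Icc (0 : ℤ) (((d : ℤ) - 1) / 2), Hsub d i s := by
  obtain ⟨a, b⟩ := p
  obtain ⟨i, hi, hcase⟩ := ZMod.exists_mem_Icc_eq_or_eq_neg hd (b - a)
  refine le_iSup₂ (f := fun i (_ : i ∈ _) => Hsub d i s) i hi ?_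
  rcases hcase with h | h
  · have : Pi.single (a, b) 1 + (s : ℂ) • Pi.single (b, a) 1 = symVec d i s a := by
      rw [symVec_eq_single, h, add_sub_cancel]
    rw [Prod.swap_prod_mk, this]
    exact Submodule.subset_span ⟨a, rfl⟩
  · have hs' : (s : ℂ) * s = 1 := by exact_mod_cast hs
    have : Pi.single (a, b) 1 + (s : ℂ) • Pi.single (b, a) 1 = (s : ℂ) • symVec d i s b := by
      rw [symVec_eq_single, h, neg_sub, add_sub_cancel, smul_add, smul_smul, hs', one_smul,
        add_comm]
    rw [Prod.swap_prod_mk, this]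
    exact Submodule.smul_mem _ _ (Submodule.subset_span ⟨b, rfl⟩)

lemma iSup_Hsub_eq_ker (hd : Odd d) (hs : s * s = 1) :
    ⨆ i ∈ Finset.Icc (0 : ℤ) (((d : ℤ) - 1) / 2), Hsub d i s =
      LinearMap.ker (swapL d - (s : ℂ) • LinearMap.id) := by
  refine le_antisymm (iSup₂_le fun i _ => Hsub_le_ker hs i) fun v hv => ?_
  have hv' : swapL d v = (s : ℂ) • v := sub_eq_zero.mp (LinearMap.mem_ker.mp hv)
  rw [eq_smul_sum_of_swapL_eq hs hv']
  exact Submodule.smul_mem _ _ (Submodule.sum_mem _ fun p _ =>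
    Submodule.smul_mem _ _ (single_add_smul_single_swap_mem hd hs p))

end Swap

theorem stmt16 (d : ℕ) [NeZero d] (hd : Odd d) :
    (∀ i : ℤ, i ∈ Finset.Icc (0 : ℤ) (((d : ℤ) - 1) / 2) → Module.finrank ℂ (Hsub d i 1) = d) ∧
    (∀ i : ℤ, i ∈ Finset.Icc (1 : ℤ) (((d : ℤ) - 1) / 2) → Module.finrank ℂ (Hsub d i (-1)) = d) ∧
    (∀ (i s : ℤ), ∀ v ∈ Hsub d i s,
      (Matrix.kroneckerMap (· * ·) (Cm d) (Cm d)).mulVec v ∈ Hsub d i s ∧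
      (Matrix.kroneckerMap (· * ·) (Sm d) (Sm d)).mulVec v ∈ Hsub d i s) ∧
    (⨆ i ∈ Finset.Icc (0 : ℤ) (((d : ℤ) - 1) / 2), Hsub d i 1) = LinearMap.ker (swapL d - LinearMap.id) ∧
    (⨆ i ∈ Finset.Icc (1 : ℤ) (((d : ℤ) - 1) / 2), Hsub d i (-1)) = LinearMap.ker (swapL d + LinearMap.id) := by
  have hcast : ∀ i ∈ Finset.Icc (1 : ℤ) (((d : ℤ) - 1) / 2), (i : ZMod d) ≠ 0 := fun i hi =>
    have := Finset.mem_Icc.mp hi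
    ZMod.intCast_ne_zero_of_pos_of_lt (by omega) (by omega)
  have hIcc : Finset.Icc (0 : ℤ) (((d : ℤ) - 1) / 2) =
      insert 0 (Finset.Icc 1 (((d : ℤ) - 1) / 2)) := by
    have := NeZero.pos d
    ext i
    simp only [Finset.mem_Icc, Finset.mem_insert]
    omega
  refine ⟨fun i _ => finrank_Hsub i 1 hd (Or.inr (by norm_num)),
    fun i hi => finrank_Hsub i (-1) hd (Or.inl (hcast i hi)),
    fun i s v hv => ⟨?_, ?_⟩, by simpa using iSup_Hsub_eq_ker hd (s := 1) (by norm_num), ?_⟩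
  · exact Matrix.mulVec_mem_span_range _ (fun j => by
      rw [kroneckerMap_Cm_mulVec_symVec]
      exact Submodule.smul_mem _ _ (Submodule.subset_span ⟨j, rfl⟩)) hv
  · exact Matrix.mulVec_mem_span_range _ (fun j => by
      rw [kroneckerMap_Sm_mulVec_symVec]
      exact Submodule.subset_span ⟨j + 1, rfl⟩) hv
  · have := iSup_Hsub_eq_ker hd (s := -1) (by norm_num)
    rw [hIcc, Finset.iSup_insert, Hsub_zero_neg_one, bot_sup_eq] at this
    rw [this]
    congr 1
    ext v q
    simp
end
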